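/- arXiv:1612.01881 — 7 statements merged into one kernel-verified Lean document; each statement's English description precedes it below -/
import Mathlib

section
/- Let p ≥ 3 be prime and a ∈ ℚ_p with |a|_p > 1, and suppose there is no c ∈ ℚ_p with c² = -a. Then for every x ∈ ℚ_p with 0 < |x|_p < 1, we have |a·x + 1/x|_p > 1. -/
/-! If `‖a x + 1/x‖ ≤ 1`, then `-a x² - 1 = -(a x + 1/x) x` has norm at most `‖x‖ < 1`, so `-a x²`
is a principal unit. For odd `p` Hensel's lemma makes every principal unit a square, and then
`-a = (c / x)²` would be a square too. -/

namespace PadicInt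

variable {p : ℕ} [Fact p.Prime]

theorem norm_two_eq_one (hp : p ≠ 2) : ‖(2 : ℤ_[p])‖ = 1 := by
  exact_mod_cast norm_natCast_eq_one_iff.mpr ((Nat.coprime_primes Fact.out Nat.prime_two).mpr hp)

theorem exists_sq_eq_of_norm_sub_one_lt (hp : p ≠ 2) {b : ℤ_[p]} (hb : ‖b - 1‖ < 1) :
    ∃ z : ℤ_[p], z ^ 2 = b := by
  have hnorm : ‖(Polynomial.X ^ 2 - Polynomial.C b).aeval (1 : ℤ_[p])‖ <
      ‖(Polynomial.X ^ 2 - Polynomial.C b).derivative.aeval (1 : ℤ_[p])‖ ^ 2 := by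
    simpa [norm_sub_rev, one_add_one_eq_two, norm_two_eq_one hp] using hb
  obtain ⟨z, hz, -⟩ := hensels_lemma hnorm
  exact ⟨z, by simpa [sub_eq_zero] using hz⟩

end PadicInt

namespace Padic

variable {p : ℕ} [Fact p.Prime]

theorem exists_sq_eq_of_norm_sub_one_lt (hp : p ≠ 2) {b : ℚ_[p]} (hb : ‖b - 1‖ < 1) :
    ∃ c : ℚ_[p], c ^ 2 = b := by
  have hb_int : ‖b‖ ≤ 1 := by
    simpa using (nonarchimedean (b - 1) 1).trans (max_le hb.le norm_one.le)
  obtain ⟨z, hz⟩ := PadicInt.exists_sq_eq_of_norm_sub_one_lt hp (b := ⟨b, hb_int⟩) hb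
  exact ⟨z, by simpa using congrArg ((↑) : ℤ_[p] → ℚ_[p]) hz⟩

end Padic

theorem stmt2_general (p : ℕ) [Fact p.Prime] (hp : 3 ≤ p) (a : ℚ_[p])
    (hsq : ¬ ∃ c : ℚ_[p], c ^ 2 = -a)
    (x : ℚ_[p]) (hx0 : 0 < ‖x‖) (hx1 : ‖x‖ < 1) :
    1 < ‖a * x + 1 / x‖ := by
  by_contra! h
  have hx : x ≠ 0 := norm_pos_iff.mp hx0
  have hunit : ‖-(a * x ^ 2) - 1‖ < 1 := calc
    ‖-(a * x ^ 2) - 1‖ = ‖a * x + 1 / x‖ * ‖x‖ := by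
      rw [← norm_mul, ← norm_neg]; congr 1; field_simp; ring
    _ ≤ 1 * ‖x‖ := by gcongr
    _ < 1 := by rwa [one_mul]
  obtain ⟨c, hc⟩ := Padic.exists_sq_eq_of_norm_sub_one_lt (by omega) hunit
  exact hsq ⟨c / x, by field_simp; linear_combination hc⟩

theorem stmt2 (p : ℕ) [Fact p.Prime] (hp : 3 ≤ p) (a : ℚ_[p]) (ha : 1 < ‖a‖)
    (hsq : ¬ ∃ c : ℚ_[p], c ^ 2 = -a)
    (x : ℚ_[p]) (hx0 : 0 < ‖x‖) (hx1 : ‖x‖ < 1) :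
    1 < ‖a * x + 1 / x‖ :=
  stmt2_general p hp a hsq x hx0 hx1
end

section
/- Let p ≥ 3 be prime and a ∈ ℚ_p with |a|_p > 1. Suppose there is no c ∈ ℚ_p with c² = -a. Then for every x ∈ ℚ_p \ {0}, the iterates of φ(x) = a·x + 1/x satisfy |φⁿ(x)|_p → ∞ as n → ∞. -/
/-!
On `‖y‖ ≥ 1` the map `φ(y) = a y + 1/y` multiplies norms by `‖a‖`, and in general
`‖φ(y)‖ = ‖a y² + 1‖ / ‖y‖`. If `‖a y² + 1‖ < 1` then, by Hensel's lemma (`p ≠ 2`), `-a y²` would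
be a square, hence so would `-a`; so `‖φ(x)‖ ≥ 1` and from then on the norms grow like `‖a‖ⁿ`.
-/

open Filter Polynomial

theorem PadicInt.isSquare_of_norm_sub_one_lt {p : ℕ} [Fact p.Prime] (hp : p ≠ 2) {u : ℤ_[p]}
    (hu : ‖u - 1‖ < 1) : IsSquare u := by
  have h2 : ‖(2 : ℤ_[p])‖ = 1 := by
    exact_mod_cast PadicInt.norm_natCast_eq_one_iff.mpr
      ((Nat.coprime_primes (Fact.out) Nat.prime_two).mpr hp)
  obtain ⟨z, hz, -⟩ := hensels_lemma (p := p) (F := X ^ 2 - C u) (a := 1)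
    (by simpa [norm_sub_rev, one_add_one_eq_two, h2] using hu)
  exact ⟨z, by simpa [sub_eq_zero, sq, eq_comm] using hz⟩

theorem Padic.isSquare_of_norm_sub_one_lt {p : ℕ} [Fact p.Prime] (hp : p ≠ 2) {u : ℚ_[p]}
    (hu : ‖u - 1‖ < 1) : IsSquare u := by
  have hu1 : ‖u‖ ≤ 1 := by
    simpa using (IsUltrametricDist.norm_add_le_max (u - 1) 1).trans (max_le hu.le (by simp))
  obtain ⟨z, hz⟩ := PadicInt.isSquare_of_norm_sub_one_lt hp (u := ⟨u, hu1⟩) hu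
  exact ⟨z, by simpa using congrArg ((↑) : ℤ_[p] → ℚ_[p]) hz⟩

theorem Padic.one_le_norm_add_one_of_not_isSquare_neg {p : ℕ} [Fact p.Prime] (hp : p ≠ 2)
    {b : ℚ_[p]} (hb : ¬IsSquare (-b)) : 1 ≤ ‖b + 1‖ := by
  by_contra! h
  exact hb (isSquare_of_norm_sub_one_lt hp (by rwa [← neg_add', norm_neg]))

section UltrametricField

variable {K : Type*} [NormedField K] [IsUltrametricDist K] {a : K}

theorem norm_mul_add_one_div_of_one_le_norm (ha : 1 < ‖a‖) {y : K} (hy : 1 ≤ ‖y‖) :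
    ‖a * y + 1 / y‖ = ‖a‖ * ‖y‖ := by
  have hinv : ‖1 / y‖ ≤ 1 := by simpa using inv_le_one_of_one_le₀ hy
  have hay : 1 < ‖a * y‖ := by rw [norm_mul]; nlinarith
  rw [IsUltrametricDist.norm_add_eq_max_of_norm_ne_norm (by linarith), norm_mul,
    max_eq_left (by rw [← norm_mul]; linarith)]

theorem norm_iterate_mul_add_one_div (ha : 1 < ‖a‖) {y : K} (hy : 1 ≤ ‖y‖) (n : ℕ) :
    ‖(fun z : K => a * z + 1 / z)^[n] y‖ = ‖a‖ ^ n * ‖y‖ := by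
  induction n with
  | zero => simp
  | succ n ih =>
    have hge : 1 ≤ ‖a‖ ^ n * ‖y‖ := one_le_mul_of_one_le_of_one_le (one_le_pow₀ ha.le) hy
    rw [Function.iterate_succ_apply', norm_mul_add_one_div_of_one_le_norm ha (ih ▸ hge), ih,
      pow_succ']
    ring

theorem one_le_norm_mul_add_one_div (ha : 1 < ‖a‖) {y : K} (hy : y ≠ 0)
    (hy2 : 1 ≤ ‖a * y ^ 2 + 1‖) : 1 ≤ ‖a * y + 1 / y‖ := by
  rcases le_total 1 ‖y‖ with hy1 | hy1
  · rw [norm_mul_add_one_div_of_one_le_norm ha hy1]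
    exact one_le_mul_of_one_le_of_one_le ha.le hy1
  · have hy0 : 0 < ‖y‖ := norm_pos_iff.mpr hy
    calc 1 ≤ ‖a * y ^ 2 + 1‖ := hy2
      _ ≤ ‖a * y ^ 2 + 1‖ / ‖y‖ := le_div_self (by positivity) hy0 hy1
      _ = ‖a * y + 1 / y‖ := by rw [← norm_div]; congr 1; field_simp

theorem tendsto_norm_iterate_mul_add_one_div (ha : 1 < ‖a‖) {y : K} (hy : y ≠ 0)
    (hy2 : 1 ≤ ‖a * y ^ 2 + 1‖) :
    Tendsto (fun n : ℕ => ‖(fun z : K => a * z + 1 / z)^[n] y‖) atTop atTop := by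
  rw [← tendsto_add_atTop_iff_nat 1]
  simp only [Function.iterate_succ_apply,
    norm_iterate_mul_add_one_div ha (one_le_norm_mul_add_one_div ha hy hy2)]
  exact (tendsto_pow_atTop_atTop_of_one_lt ha).atTop_mul_const
    (one_pos.trans_le (one_le_norm_mul_add_one_div ha hy hy2))

end UltrametricField

theorem stmt3 (p : ℕ) [Fact p.Prime] (hp : 3 ≤ p) (a : ℚ_[p]) (ha : 1 < ‖a‖)
    (hsq : ¬ ∃ c : ℚ_[p], c ^ 2 = -a)
    (x : ℚ_[p]) (hx : x ≠ 0) :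
    Filter.Tendsto (fun n : ℕ => ‖(fun z : ℚ_[p] => a * z + 1 / z)^[n] x‖)
      Filter.atTop Filter.atTop := by
  have hax : ¬IsSquare (-(a * x ^ 2)) := by
    rintro ⟨c, hc⟩
    exact hsq ⟨c / x, by field_simp; linear_combination -hc⟩
  exact tendsto_norm_iterate_mul_add_one_div ha hx
    (Padic.one_le_norm_add_one_of_not_isSquare_neg (by omega) hax)
end

section
/- Let p ≥ 3 be prime, a ∈ ℚ_p with |a|_p > 1 and b ∈ ℚ_p with b² = 1 - a. Set x₁ = 1/b and r = |x₁|_p / p (note |x₁|_p = |a|_p^{-1/2}). Then for all x, y in the closed disk D(x₁, r) = {z ∈ ℚ_p : |z - x₁|_p ≤ r}, one has |φ(x) - φ(y)|_p = |a|_p · |x - y|_p, where φ(x) = a·x + 1/x. -/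
/-!
Since `φ x - φ y = (a - 1/(x y)) (x - y)`, it suffices that `‖a - 1/(x y)‖ = ‖a‖` on the disk.
Points of the disk have the form `x = x₁ u` with `‖u - 1‖ < 1`, and such `u` form a group, so
`1/(x y) = b² v` with `‖v - 1‖ < 1`; hence `1/(x y)` is strictly closer than `‖b²‖ = ‖a‖` to
`b² = 1 - a`. Since `‖2‖ = 1` and `‖a‖ > 1`, `‖a - b²‖ = ‖2a - 1‖ = ‖a‖`, and the ultrametric
inequality concludes.
-/

open IsUltrametricDist

section NormedField

variable {K : Type*} [NormedField K]

lemma norm_mul_sub_one_lt_one_of_norm_sub_inv_le {b x : K} {c : ℝ} (hb : b ≠ 0) (hc : 1 < c)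
    (hx : ‖x - 1 / b‖ ≤ ‖1 / b‖ / c) : ‖x * b - 1‖ < 1 := by
  have hb' : 0 < ‖b‖ := norm_pos_iff.mpr hb
  calc ‖x * b - 1‖ = ‖x - 1 / b‖ * ‖b‖ := by rw [← norm_mul, sub_mul, one_div_mul_cancel hb]
    _ ≤ ‖1 / b‖ / c * ‖b‖ := by gcongr
    _ = 1 / c := by rw [norm_div, norm_one]; field_simp
    _ < 1 := (div_lt_one (by linarith)).mpr hc

variable [IsUltrametricDist K]

lemma norm_add_eq_left_of_norm_lt {x y : K} (h : ‖y‖ < ‖x‖) : ‖x + y‖ = ‖x‖ := by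
  rw [norm_add_eq_max_of_norm_ne_norm h.ne', max_eq_left h.le]

lemma norm_eq_one_of_norm_sub_one_lt_one {u : K} (hu : ‖u - 1‖ < 1) : ‖u‖ = 1 := by
  have h := norm_add_eq_left_of_norm_lt (x := (1 : K)) (y := u - 1) (by rwa [norm_one])
  rwa [add_sub_cancel, norm_one] at h

lemma norm_mul_sub_one_lt_one {u v : K} (hu : ‖u - 1‖ < 1) (hv : ‖v - 1‖ < 1) :
    ‖u * v - 1‖ < 1 := by
  rw [show u * v - 1 = u * (v - 1) + (u - 1) by ring]
  refine (norm_add_le_max _ _).trans_lt (max_lt ?_ hu)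
  rwa [norm_mul, norm_eq_one_of_norm_sub_one_lt_one hu, one_mul]

lemma norm_inv_sub_one_lt_one {u : K} (hu : ‖u - 1‖ < 1) : ‖u⁻¹ - 1‖ < 1 := by
  have hu1 := norm_eq_one_of_norm_sub_one_lt_one hu
  have hu0 : u ≠ 0 := norm_ne_zero_iff.mp (by rw [hu1]; exact one_ne_zero)
  rwa [show u⁻¹ - 1 = -(u - 1) * u⁻¹ by field_simp; ring, norm_mul, norm_neg, norm_inv, hu1,
    inv_one, mul_one]

lemma norm_sub_inv_mul_eq_norm {a b x y : K} (h2 : ‖(2 : K)‖ = 1) (ha : 1 < ‖a‖)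
    (hb : b ^ 2 = 1 - a) (hx : ‖x * b - 1‖ < 1) (hy : ‖y * b - 1‖ < 1) :
    ‖a - (x * y)⁻¹‖ = ‖a‖ := by
  have h1a : ‖(-1 : K)‖ < ‖a‖ := by rwa [norm_neg, norm_one]
  have h2a : ‖2 * a - 1‖ = ‖a‖ := by
    rw [sub_eq_add_neg, norm_add_eq_left_of_norm_lt (by rwa [norm_mul, h2, one_mul]),
      norm_mul, h2, one_mul]
  have hb2 : ‖b ^ 2‖ = ‖a‖ := by
    rw [hb, norm_sub_rev, sub_eq_add_neg, norm_add_eq_left_of_norm_lt h1a]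
  have hb0 : b ≠ 0 := by
    rintro rfl
    rw [norm_pow, norm_zero, zero_pow two_ne_zero] at hb2
    linarith
  have hclose : ‖(x * y)⁻¹ - b ^ 2‖ < ‖a‖ := by
    rw [show (x * y)⁻¹ - b ^ 2 = b ^ 2 * ((x * b * (y * b))⁻¹ - 1) by field_simp, norm_mul, hb2]
    exact mul_lt_of_lt_one_right (by linarith)
      (norm_inv_sub_one_lt_one (norm_mul_sub_one_lt_one hx hy))
  rw [show a - (x * y)⁻¹ = (2 * a - 1) + -((x * y)⁻¹ - b ^ 2) by rw [hb]; ring,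
    norm_add_eq_left_of_norm_lt (by rwa [norm_neg, h2a]), h2a]

end NormedField

theorem stmt5 (p : ℕ) [Fact p.Prime] (hp : 3 ≤ p) (a b : ℚ_[p]) (ha : 1 < ‖a‖)
    (hb : b ^ 2 = 1 - a)
    (x y : ℚ_[p])
    (hx : ‖x - 1 / b‖ ≤ ‖(1 / b : ℚ_[p])‖ / p)
    (hy : ‖y - 1 / b‖ ≤ ‖(1 / b : ℚ_[p])‖ / p) :
    ‖(a * x + 1 / x) - (a * y + 1 / y)‖ = ‖a‖ * ‖x - y‖ := by
  have hb0 : b ≠ 0 := by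
    rintro rfl
    rw [show a = 1 by linear_combination hb, norm_one] at ha
    exact lt_irrefl 1 ha
  have hp1 : (1 : ℝ) < p := by exact_mod_cast (by omega : 1 < p)
  have hxb := norm_mul_sub_one_lt_one_of_norm_sub_inv_le hb0 hp1 hx
  have hyb := norm_mul_sub_one_lt_one_of_norm_sub_inv_le hb0 hp1 hy
  have hx0 : x ≠ 0 := by rintro rfl; simp at hxb
  have hy0 : y ≠ 0 := by rintro rfl; simp at hyb
  have h2 : ‖(2 : ℚ_[p])‖ = 1 := by
    exact_mod_cast Padic.norm_natCast_eq_one_iff.mpr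
      ((Nat.coprime_primes Fact.out Nat.prime_two).mpr (by omega))
  rw [show (a * x + 1 / x) - (a * y + 1 / y) = (a - (x * y)⁻¹) * (x - y) by field_simp; ring,
    norm_mul, norm_sub_inv_mul_eq_norm h2 ha hb hxb hyb]
end

section
/- Let p ≥ 3 be prime and a ∈ ℚ_p with 0 < |a|_p < 1, such that -a is not a square in ℚ_p. Let x, y ∈ ℚ_p be nonzero with |x·y|_p = 1 and |a·x + 1/x|_p·|x|_p = 1 and |a·y + 1/y|_p·|y|_p = 1. Then |φ²(x) - φ²(y)|_p ≤ |x - y|_p, where φ(z) = a·z + 1/z and φ² = φ ∘ φ. -/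
lemma step_aux {p : ℕ} [Fact p.Prime] (a : ℚ_[p]) (ha1 : ‖a‖ < 1)
    (u v : ℚ_[p]) (hu : u ≠ 0) (hv : v ≠ 0) (huv : ‖u * v‖ = 1) :
    ‖(a * u + 1 / u) - (a * v + 1 / v)‖ ≤ ‖u - v‖ := by
  have key : (a * u + 1 / u) - (a * v + 1 / v) = (a - 1 / (u * v)) * (u - v) := by
    field_simp; ring
  rw [key, norm_mul]
  have h1 : ‖(1 : ℚ_[p]) / (u * v)‖ = 1 := by
    rw [norm_div, norm_one, huv, div_one]
  have h2 : ‖a - 1 / (u * v)‖ ≤ 1 := by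
    have := Padic.nonarchimedean a (-(1 / (u * v)))
    rw [← sub_eq_add_neg] at this
    refine le_trans this ?_
    rw [norm_neg, h1]
    exact max_le ha1.le le_rfl
  calc ‖a - 1 / (u * v)‖ * ‖u - v‖ ≤ 1 * ‖u - v‖ := by
        exact mul_le_mul_of_nonneg_right h2 (norm_nonneg _)
    _ = ‖u - v‖ := one_mul _

theorem stmt7 (p : ℕ) [Fact p.Prime] (hp : 3 ≤ p) (a : ℚ_[p])
    (ha0 : 0 < ‖a‖) (ha1 : ‖a‖ < 1)
    (hsq : ¬ ∃ c : ℚ_[p], c ^ 2 = -a)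
    (x y : ℚ_[p]) (hx : x ≠ 0) (hy : y ≠ 0)
    (hxy : ‖x * y‖ = 1)
    (hpx : ‖a * x + 1 / x‖ * ‖x‖ = 1)
    (hpy : ‖a * y + 1 / y‖ * ‖y‖ = 1) :
    ‖(fun z : ℚ_[p] => a * z + 1 / z)^[2] x -
      (fun z : ℚ_[p] => a * z + 1 / z)^[2] y‖ ≤ ‖x - y‖ := by
  set u := a * x + 1 / x with hu_def
  set v := a * y + 1 / y with hv_def
  have hu : u ≠ 0 := by
    intro h
    rw [h, norm_zero, zero_mul] at hpx
    exact one_ne_zero hpx.symm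
  have hv : v ≠ 0 := by
    intro h
    rw [h, norm_zero, zero_mul] at hpy
    exact one_ne_zero hpy.symm
  have huv : ‖u * v‖ = 1 := by
    rw [norm_mul] at hxy ⊢
    have hu' : ‖u‖ = ‖x‖⁻¹ := eq_inv_of_mul_eq_one_right (by rw [mul_comm]; exact hpx)
    have hv' : ‖v‖ = ‖y‖⁻¹ := eq_inv_of_mul_eq_one_right (by rw [mul_comm]; exact hpy)
    rw [hu', hv', ← mul_inv, hxy, inv_one]
  have h1 : ‖u - v‖ ≤ ‖x - y‖ := step_aux a ha1 x y hx hy hxy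
  have h2 : ‖(a * u + 1 / u) - (a * v + 1 / v)‖ ≤ ‖u - v‖ :=
    step_aux a ha1 u v hu hv huv
  simpa [Function.iterate_succ, Function.comp, hu_def, hv_def, one_div] using le_trans h2 h1
end

section
/- Let p ≥ 3 be prime and a ∈ ℚ_p with |a|_p > 1 and b ∈ ℚ_p with b² = 1 - a. Set x₁ = 1/b, x₂ = -1/b, and r = |x₁|_p/p. Then for every nonzero x ∈ ℚ_p with |x - x₁|_p > r and |x - x₂|_p > r, we have |a·x + 1/x|_p > 1. -/
/-!
Write `a * x + 1 / x = x - y` with `y = b² (x - 1/b) (x + 1/b) / x`. Since the norms of `ℚ_p` are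
the powers of `p`, the hypothesis `‖x ∓ 1/b‖ > ‖1/b‖ / p` forces `‖x ∓ 1/b‖ = max ‖x‖ ‖1/b‖`:
without cancellation in the middle case `‖x‖ = ‖1/b‖`, and by the ultrametric inequality
otherwise. Then `‖y‖ = ‖b‖² max(‖x‖, ‖1/b‖)² / ‖x‖` is at least `‖b‖ > 1` and exceeds `‖x‖`,
so `‖a * x + 1 / x‖ = ‖y‖ > 1`.
-/

open IsUltrametricDist

namespace Padic

variable {p : ℕ} [Fact p.Prime]

theorem norm_le_of_norm_div_lt {y z : ℚ_[p]} (hz : z ≠ 0) (h : ‖z‖ / p < ‖y‖) : ‖z‖ ≤ ‖y‖ := by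
  rw [norm_eq_zpow_neg_valuation hz] at h ⊢
  have hp : (p : ℝ) ≠ 0 := by exact_mod_cast (Fact.out : p.Prime).ne_zero
  rw [div_eq_mul_inv, ← zpow_sub_one₀ hp] at h
  by_contra! hlt
  exact (not_lt.mpr ((norm_lt_pow_iff_norm_le_pow_sub_one y _).mp hlt)) h

theorem norm_sub_eq_max_of_norm_div_lt {y z : ℚ_[p]} (hz : z ≠ 0) (h : ‖z‖ / p < ‖y - z‖) :
    ‖y - z‖ = max ‖y‖ ‖z‖ := by
  rcases eq_or_ne ‖y‖ ‖z‖ with hyz | hyz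
  · rw [hyz, max_self]
    refine le_antisymm ?_ (norm_le_of_norm_div_lt hz h)
    simpa [sub_eq_add_neg, hyz] using norm_add_le_max y (-z)
  · simpa [sub_eq_add_neg] using norm_add_eq_max_of_norm_ne_norm (x := y) (y := -z) (by simpa)

end Padic

section UltrametricField

variable {K : Type*} [NormedField K] [IsUltrametricDist K]

theorem one_lt_norm_of_sq_eq_one_sub {a b : K} (ha : 1 < ‖a‖) (hb : b ^ 2 = 1 - a) :
    1 < ‖b‖ := by
  have h1a : ‖(1 : K) - a‖ = ‖a‖ := by
    rw [sub_eq_add_neg, norm_add_eq_max_of_norm_ne_norm (by simpa using ha.ne), norm_neg,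
      norm_one, max_eq_right ha.le]
  have hb2 : ‖b‖ ^ 2 = ‖a‖ := by rw [← norm_pow, hb, h1a]
  nlinarith [norm_nonneg b]

theorem norm_le_norm_mul_add_inv {b x : K} (hb : 1 < ‖b‖) (hx : x ≠ 0)
    (h₁ : ‖x - b⁻¹‖ = max ‖x‖ ‖b⁻¹‖) (h₂ : ‖x + b⁻¹‖ = max ‖x‖ ‖b⁻¹‖) :
    ‖b‖ ≤ ‖(1 - b ^ 2) * x + x⁻¹‖ := by
  have hb0 : b ≠ 0 := norm_pos_iff.mp (one_pos.trans hb)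
  have hX : 0 < ‖x‖ := norm_pos_iff.mpr hx
  set m := max ‖x‖ ‖b⁻¹‖
  set y := b ^ 2 * (x - b⁻¹) * (x + b⁻¹) / x
  have hsplit : (1 - b ^ 2) * x + x⁻¹ = -y + x := by
    simp only [y]
    field_simp
    ring
  have hy : ‖y‖ * ‖x‖ = ‖b‖ ^ 2 * m ^ 2 := by
    simp only [y, norm_div, norm_mul, norm_pow, h₁, h₂]
    field_simp
  have hm_x : ‖x‖ ≤ m := le_max_left _ _
  have hm_b : ‖b‖⁻¹ ≤ m := norm_inv b ▸ le_max_right _ _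
  have hby : ‖b‖ ≤ ‖y‖ := by
    refine le_of_mul_le_mul_right ?_ hX
    calc ‖b‖ * ‖x‖ = ‖b‖ ^ 2 * ‖x‖ * ‖b‖⁻¹ := by field_simp
      _ ≤ ‖b‖ ^ 2 * m * m := by gcongr
      _ = ‖y‖ * ‖x‖ := by rw [hy]; ring
  have hxy : ‖x‖ < ‖y‖ := by
    refine lt_of_mul_lt_mul_right ?_ (norm_nonneg x)
    calc ‖x‖ * ‖x‖ < ‖b‖ ^ 2 * (‖x‖ * ‖x‖) := by
          exact lt_mul_left (by positivity) (by nlinarith)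
      _ ≤ ‖b‖ ^ 2 * m ^ 2 := by gcongr; nlinarith
      _ = ‖y‖ * ‖x‖ := hy.symm
  rw [hsplit, norm_add_eq_max_of_norm_ne_norm (by simpa using hxy.ne'), norm_neg,
    max_eq_left (by simpa using hxy.le)]
  exact hby

end UltrametricField

theorem stmt13_general (p : ℕ) [Fact p.Prime] (a b : ℚ_[p]) (ha : 1 < ‖a‖)
    (hb : b ^ 2 = 1 - a)
    (x : ℚ_[p]) (hx : x ≠ 0)
    (h1 : ‖(1 / b : ℚ_[p])‖ / p < ‖x - 1 / b‖)
    (h2 : ‖(1 / b : ℚ_[p])‖ / p < ‖x - (-(1 / b))‖) :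
    1 < ‖a * x + 1 / x‖ := by
  have hb1 : 1 < ‖b‖ := one_lt_norm_of_sq_eq_one_sub ha hb
  have hbinv : b⁻¹ ≠ 0 := inv_ne_zero (norm_pos_iff.mp (one_pos.trans hb1))
  rw [one_div] at h1 h2
  have e₁ := Padic.norm_sub_eq_max_of_norm_div_lt hbinv h1
  have e₂ := Padic.norm_sub_eq_max_of_norm_div_lt (neg_ne_zero.mpr hbinv) (by rwa [norm_neg])
  rw [sub_neg_eq_add, norm_neg] at e₂
  have ha' : a = 1 - b ^ 2 := by rw [hb]; ring
  rw [ha', one_div]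
  exact hb1.trans_le (norm_le_norm_mul_add_inv hb1 hx e₁ e₂)

theorem stmt13 (p : ℕ) [Fact p.Prime] (hp : 3 ≤ p) (a b : ℚ_[p]) (ha : 1 < ‖a‖)
    (hb : b ^ 2 = 1 - a)
    (x : ℚ_[p]) (hx : x ≠ 0)
    (h1 : ‖(1 / b : ℚ_[p])‖ / p < ‖x - 1 / b‖)
    (h2 : ‖(1 / b : ℚ_[p])‖ / p < ‖x - (-(1 / b))‖) :
    1 < ‖a * x + 1 / x‖ :=
  stmt13_general p a b ha hb x hx h1 h2
end

section
/- Let p ≥ 3 be prime and a ∈ ℚ_p with 0 < |a|_p < 1, such that -a is not a square in ℚ_p. Then for every nonzero x ∈ ℚ_p there exists N such that for all n ≥ N, p^{-⌊v_p(a)/2⌋} ≤ |φⁿ(x)|_p ≤ p^{⌊v_p(a)/2⌋}, where φ(z) = a·z + 1/z. -/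
/-!
Because `p` is odd and `-a` is not a square, `a z² + 1` never cancels: if `‖a z²‖ = 1` and
`‖a z² + 1‖ < 1`, then `-a z²` is a unit congruent to `1`, hence a square by Hensel's lemma.
So `v (a z + 1 / z) = min (v a + v z) (-v z)`, and the valuations along an orbit follow this
explicit map on `ℤ`. With `m = ⌊v a / 2⌋`, that map sends everything into `(-∞, m]` in one
step, and from there it raises the valuation by at least one until it reaches `[-m, m]`, which
is invariant.
-/

open Filter Function Polynomial

namespace PadicInt

variable {p : ℕ} [Fact p.Prime]

theorem isSquare_of_norm_sub_one_lt_s17 (hp : p ≠ 2) {u : ℤ_[p]} (hu : ‖u - 1‖ < 1) :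
    IsSquare u := by
  have h2 : ‖(2 : ℤ_[p])‖ = 1 := mod_cast
    norm_natCast_eq_one_iff.mpr ((Nat.coprime_primes Fact.out Nat.prime_two).mpr hp)
  obtain ⟨c, hc, -⟩ := hensels_lemma (p := p) (F := (X ^ 2 - C u : ℤ_[p][X])) (a := 1)
    (by simpa [norm_sub_rev, h2, one_add_one_eq_two] using hu)
  exact ⟨c, (sub_eq_zero.mp (by simpa [sq] using hc)).symm⟩

end PadicInt

namespace Padic

variable {p : ℕ} [Fact p.Prime]

theorem norm_add_one_of_not_isSquare_neg (hp : p ≠ 2) {w : ℚ_[p]} (hw : ¬IsSquare (-w)) :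
    ‖w + 1‖ = max ‖w‖ 1 := by
  rcases ne_or_eq ‖w‖ 1 with hne | heq
  · simpa using add_eq_max_of_ne (r := 1) (by simpa using hne)
  rw [heq, max_self]
  refine le_antisymm ((nonarchimedean _ _).trans (by simp [heq])) (not_lt.mp fun hlt => hw ?_)
  obtain ⟨c, hc⟩ := PadicInt.isSquare_of_norm_sub_one_lt_s17 hp (u := ⟨-w, by simp [heq]⟩) <| by
    rw [PadicInt.norm_def]
    show ‖-w - 1‖ < 1
    rwa [← norm_neg, neg_sub', neg_neg, sub_neg_eq_add]
  exact ⟨c, by simpa using congrArg ((↑) : ℤ_[p] → ℚ_[p]) hc⟩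

theorem valuation_add_one_of_not_isSquare_neg (hp : p ≠ 2) {w : ℚ_[p]} (hw0 : w ≠ 0)
    (hw : ¬IsSquare (-w)) : w + 1 ≠ 0 ∧ (w + 1).valuation = min w.valuation 0 := by
  have hw1 : w + 1 ≠ 0 := fun h => hw ⟨1, by linear_combination -h⟩
  have hp1 : (1 : ℝ) < p := mod_cast (Fact.out : p.Prime).one_lt
  have hnorm := norm_add_one_of_not_isSquare_neg hp hw
  rw [norm_eq_zpow_neg_valuation hw1, norm_eq_zpow_neg_valuation hw0, ← zpow_zero (p : ℝ),
    ← (zpow_right_strictMono₀ hp1).monotone.map_max] at hnorm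
  have := zpow_right_injective₀ (by positivity) hp1.ne' hnorm
  exact ⟨hw1, by omega⟩

theorem valuation_mul_add_one_div (hp : p ≠ 2) {a : ℚ_[p]} (ha : ¬IsSquare (-a)) {z : ℚ_[p]}
    (hz : z ≠ 0) : a * z + 1 / z ≠ 0 ∧
      (a * z + 1 / z).valuation = min (a.valuation + z.valuation) (-z.valuation) := by
  have ha0 : a ≠ 0 := by rintro rfl; exact ha ⟨0, by simp⟩
  have hsq : ¬IsSquare (-(a * z ^ 2)) := fun ⟨c, hc⟩ =>
    ha ⟨c / z, by field_simp; linear_combination hc⟩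
  obtain ⟨hne, hval⟩ :=
    valuation_add_one_of_not_isSquare_neg hp (mul_ne_zero ha0 (pow_ne_zero 2 hz)) hsq
  have hφ : a * z + 1 / z = (a * z ^ 2 + 1) * z⁻¹ := by field_simp
  rw [hφ, valuation_mul hne (inv_ne_zero hz), hval, valuation_mul ha0 (pow_ne_zero 2 hz),
    valuation_pow, valuation_inv]
  exact ⟨mul_ne_zero hne (inv_ne_zero hz), by push_cast; omega⟩

theorem zpow_neg_le_norm_and_norm_le_zpow {y : ℚ_[p]} (hy : y ≠ 0) {m : ℤ}
    (h : |y.valuation| ≤ m) : (p : ℝ) ^ (-m) ≤ ‖y‖ ∧ ‖y‖ ≤ (p : ℝ) ^ m := by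
  have hp1 : (1 : ℝ) ≤ p := mod_cast (Fact.out : p.Prime).one_lt.le
  rw [norm_eq_zpow_neg_valuation hy, abs_le] at *
  exact ⟨zpow_le_zpow_right₀ hp1 (by omega), zpow_le_zpow_right₀ hp1 (by omega)⟩

end Padic

theorem Int.eventually_abs_iterate_min_add_neg_le {V : ℤ} (hV : 0 < V) (k : ℤ) :
    ∀ᶠ n in atTop, |(fun j : ℤ => min (V + j) (-j))^[n] k| ≤ V / 2 := by
  set f := fun j : ℤ => min (V + j) (-j)
  have hle : ∀ j, f j ≤ V / 2 := fun j => by simp only [f]; omega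
  have hstep : ∀ j ≤ V / 2, min (j + 1) (-(V / 2)) ≤ f j := fun j hj => by
    simp only [f]; omega
  have hlow : ∀ n : ℕ, min (f k + n) (-(V / 2)) ≤ f^[n + 1] k := by
    intro n
    induction n with
    | zero => simp
    | succ n ih =>
      rw [iterate_succ_apply']
      have := hstep (f^[n + 1] k) (by rw [iterate_succ_apply']; exact hle _)
      push_cast
      omega
  refine eventually_atTop.mpr ⟨(-(V / 2) - f k).toNat + 1, fun n hn => ?_⟩
  obtain ⟨n, rfl⟩ : ∃ n', n = n' + 1 := ⟨n - 1, by omega⟩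
  have hlo := hlow n
  have hhi : f^[n + 1] k ≤ V / 2 := by rw [iterate_succ_apply']; exact hle _
  rw [abs_le]
  omega

theorem stmt17_general (p : ℕ) [Fact p.Prime] (hp : 3 ≤ p) (a : ℚ_[p])
    (ha1 : ‖a‖ < 1)
    (hsq : ¬ ∃ c : ℚ_[p], c ^ 2 = -a)
    (x : ℚ_[p]) (hx : x ≠ 0) :
    ∃ N : ℕ, ∀ n ≥ N,
      (p : ℝ) ^ (-(a.valuation / 2)) ≤ ‖(fun z : ℚ_[p] => a * z + 1 / z)^[n] x‖ ∧
      ‖(fun z : ℚ_[p] => a * z + 1 / z)^[n] x‖ ≤ (p : ℝ) ^ (a.valuation / 2) := by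
  have hp2 : p ≠ 2 := by omega
  have hsq' : ¬IsSquare (-a) := fun ⟨c, hc⟩ => hsq ⟨c, by rw [hc, sq]⟩
  have ha0 : a ≠ 0 := by rintro rfl; exact hsq' ⟨0, by simp⟩
  have hV : 0 < a.valuation := by
    have hp1 : (1 : ℝ) < p := mod_cast (Fact.out : p.Prime).one_lt
    rwa [Padic.norm_eq_zpow_neg_valuation ha0, ← zpow_zero (p : ℝ),
      zpow_lt_zpow_iff_right₀ hp1, neg_neg_iff_pos] at ha1
  have hmaps : Set.MapsTo (fun z : ℚ_[p] => a * z + 1 / z) {0}ᶜ {0}ᶜ := fun z hz =>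
    (Padic.valuation_mul_add_one_div hp2 hsq' hz).1
  -- at `z = 0` both sides vanish, thanks to `1 / 0 = 0` and `0 ≤ a.valuation`
  have hconj : Semiconj Padic.valuation (fun z : ℚ_[p] => a * z + 1 / z)
      (fun k : ℤ => min (a.valuation + k) (-k)) := by
    intro z
    rcases eq_or_ne z 0 with rfl | hz
    · simp [hV.le]
    · exact (Padic.valuation_mul_add_one_div hp2 hsq' hz).2
  obtain ⟨N, hN⟩ :=
    eventually_atTop.mp (Int.eventually_abs_iterate_min_add_neg_le hV x.valuation)
  refine ⟨N, fun n hn => Padic.zpow_neg_le_norm_and_norm_le_zpow (hmaps.iterate n hx) ?_⟩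
  rw [hconj.iterate_right n x]
  exact hN n hn

theorem stmt17 (p : ℕ) [Fact p.Prime] (hp : 3 ≤ p) (a : ℚ_[p])
    (ha0 : 0 < ‖a‖) (ha1 : ‖a‖ < 1)
    (hsq : ¬ ∃ c : ℚ_[p], c ^ 2 = -a)
    (x : ℚ_[p]) (hx : x ≠ 0) :
    ∃ N : ℕ, ∀ n ≥ N,
      (p : ℝ) ^ (-(a.valuation / 2)) ≤ ‖(fun z : ℚ_[p] => a * z + 1 / z)^[n] x‖ ∧
      ‖(fun z : ℚ_[p] => a * z + 1 / z)^[n] x‖ ≤ (p : ℝ) ^ (a.valuation / 2) :=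
  stmt17_general p hp a ha1 hsq x hx
end

section
/- Let p ≥ 3 be prime and a ∈ ℚ_p with 0 < |a|_p < 1, such that -a is not a square in ℚ_p. Let x₀ ∈ ℚ_p with p^{-⌊v_p(a)/2⌋} ≤ |x₀|_p ≤ p^{⌊v_p(a)/2⌋}, and let x ∈ ℚ_p with |x - x₀|_p ≤ |x₀|_p/p. Then |φ²(x) - φ²(x₀)|_p ≤ |x - x₀|_p, where φ(z) = a·z + 1/z and φ² = φ ∘ φ. -/
/-!
Write `φ z = a z + 1/z` and `r = ‖x₀‖`. From `φ y - φ z = (y - z)(a - 1/(y z))` and the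
ultrametric inequality, `‖φ y - φ z‖ ≤ ‖y - z‖ · max ‖a‖ (‖y‖ ‖z‖)⁻¹`. The annulus condition on
`x₀` gives `‖a‖ r² ≤ 1` and `‖a‖ ≤ r²`, and `‖x‖ = r`. Since `-a` is not a square and `p` is odd,
`a y² + 1` is a unit whenever `‖a y²‖ ≤ 1` (otherwise Hensel makes `-a y²` a square), so
`‖φ y‖ = ‖y‖⁻¹`: both `x, x₀` and their images `φ x, φ x₀` lie on a sphere, of radius `r` and
`r⁻¹` respectively. Hence the first step of `φ²` stretches distances by at most `r⁻²` and the
second by at most `r²`.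
-/

section Phi

variable {K : Type*}

def phi [DivisionRing K] (a z : K) : K := a * z + 1 / z

theorem phi_sub_phi [Field K] (a : K) {y z : K} (hy : y ≠ 0) (hz : z ≠ 0) :
    phi a y - phi a z = (y - z) * (a - 1 / (y * z)) := by
  unfold phi
  field_simp
  ring

variable [NormedField K]

theorem norm_phi_of_norm_mul_sq_add_one {a y : K} (h : ‖a * y ^ 2 + 1‖ = 1) :
    ‖phi a y‖ = ‖y‖⁻¹ := by
  rcases eq_or_ne y 0 with rfl | hy
  · simp [phi]
  · have : phi a y = (a * y ^ 2 + 1) / y := by unfold phi; field_simp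
    rw [this, norm_div, h, one_div]

theorem norm_phi_sub_phi_le [IsUltrametricDist K] (a : K) {y z : K} (hy : y ≠ 0) (hz : z ≠ 0) :
    ‖phi a y - phi a z‖ ≤ ‖y - z‖ * max ‖a‖ (‖y‖ * ‖z‖)⁻¹ := by
  rw [phi_sub_phi a hy hz, norm_mul]
  gcongr
  calc ‖a - 1 / (y * z)‖ = ‖a + -(1 / (y * z))‖ := by rw [sub_eq_add_neg]
    _ ≤ max ‖a‖ ‖-(1 / (y * z))‖ := IsUltrametricDist.norm_add_le_max _ _
    _ = max ‖a‖ (‖y‖ * ‖z‖)⁻¹ := by rw [norm_neg, norm_div, norm_one, norm_mul, one_div]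

theorem norm_phi_iterate_two_sub_le [IsUltrametricDist K] {a x x₀ : K} (hx₀ : x₀ ≠ 0)
    (hx : ‖x‖ = ‖x₀‖) (hunit : ∀ y : K, ‖y‖ = ‖x₀‖ → ‖a * y ^ 2 + 1‖ = 1)
    (ha_le : ‖a‖ ≤ ‖x₀‖ ^ 2) (ha_mul_le : ‖a‖ * ‖x₀‖ ^ 2 ≤ 1) :
    ‖(phi a)^[2] x - (phi a)^[2] x₀‖ ≤ ‖x - x₀‖ := by
  have hr : 0 < ‖x₀‖ := norm_pos_iff.mpr hx₀
  have hx_ne : x ≠ 0 := norm_ne_zero_iff.mp (hx ▸ hr.ne')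
  have hφx : ‖phi a x‖ = ‖x₀‖⁻¹ := hx ▸ norm_phi_of_norm_mul_sq_add_one (hunit x hx)
  have hφx₀ : ‖phi a x₀‖ = ‖x₀‖⁻¹ := norm_phi_of_norm_mul_sq_add_one (hunit x₀ rfl)
  have hφx_ne : phi a x ≠ 0 := norm_ne_zero_iff.mp (by rw [hφx]; positivity)
  have hφx₀_ne : phi a x₀ ≠ 0 := norm_ne_zero_iff.mp (by rw [hφx₀]; positivity)
  have h_first : ‖phi a x - phi a x₀‖ ≤ ‖x - x₀‖ * (‖x₀‖ ^ 2)⁻¹ := by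
    refine (norm_phi_sub_phi_le a hx_ne hx₀).trans_eq ?_
    rw [hx, ← sq, max_eq_right]
    rwa [← one_div, le_div_iff₀ (by positivity)]
  have h_second : ‖phi a (phi a x) - phi a (phi a x₀)‖ ≤ ‖phi a x - phi a x₀‖ * ‖x₀‖ ^ 2 := by
    refine (norm_phi_sub_phi_le a hφx_ne hφx₀_ne).trans_eq ?_
    rw [hφx, hφx₀, ← mul_inv, inv_inv, ← sq, max_eq_right ha_le]
  calc ‖(phi a)^[2] x - (phi a)^[2] x₀‖
      = ‖phi a (phi a x) - phi a (phi a x₀)‖ := rfl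
    _ ≤ ‖x - x₀‖ * (‖x₀‖ ^ 2)⁻¹ * ‖x₀‖ ^ 2 :=
      h_second.trans (mul_le_mul_of_nonneg_right h_first (by positivity))
    _ = ‖x - x₀‖ := by field_simp

end Phi

namespace Padic

variable {p : ℕ} [Fact p.Prime]

open Polynomial in
theorem isSquare_of_norm_sub_one_lt_one (hp : p ≠ 2) {u : ℚ_[p]} (hu : ‖u - 1‖ < 1) :
    IsSquare u := by
  have hu_int : ‖u‖ ≤ 1 := by
    simpa using (IsUltrametricDist.norm_add_le_max (u - 1) 1).trans
      (max_le hu.le norm_one.le)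
  set U : ℤ_[p] := ⟨u, hu_int⟩
  have h_two : ‖(2 : ℤ_[p])‖ = 1 := by
    exact_mod_cast PadicInt.norm_natCast_eq_one_iff.mpr
      ((Nat.coprime_primes Fact.out Nat.prime_two).mpr hp)
  have h_eval : aeval (1 : ℤ_[p]) (X ^ 2 - C U) = -(U - 1) := by simp
  have h_deriv : aeval (1 : ℤ_[p]) (derivative (X ^ 2 - C U)) = 2 := by simp [one_add_one_eq_two]
  have hF : ‖aeval (1 : ℤ_[p]) (X ^ 2 - C U)‖ <
      ‖aeval (1 : ℤ_[p]) (derivative (X ^ 2 - C U))‖ ^ 2 := by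
    rw [h_eval, h_deriv, h_two, norm_neg, one_pow]
    exact hu
  obtain ⟨z, hz, -⟩ := hensels_lemma hF
  refine ⟨z, ?_⟩
  have hzU : z * z = U := by simpa [sq, sub_eq_zero] using hz
  exact (congrArg ((↑) : ℤ_[p] → ℚ_[p]) hzU).symm.trans (PadicInt.coe_mul z z)

theorem norm_mul_sq_add_one_eq_one (hp : p ≠ 2) {a y : ℚ_[p]} (ha : ¬IsSquare (-a))
    (hy : ‖a * y ^ 2‖ ≤ 1) : ‖a * y ^ 2 + 1‖ = 1 := by
  rcases hy.lt_or_eq with hlt | heq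
  · rw [IsUltrametricDist.norm_add_eq_max_of_norm_ne_norm (by rw [norm_one]; exact hlt.ne),
      norm_one, max_eq_right hlt.le]
  · refine le_antisymm ((IsUltrametricDist.norm_add_le_max _ _).trans (by simp [heq])) ?_
    by_contra! h_small
    have hy₀ : y ≠ 0 := by rintro rfl; simp at heq
    obtain ⟨c, hc⟩ := isSquare_of_norm_sub_one_lt_one hp (u := -(a * y ^ 2)) <| by
      rwa [← norm_neg, neg_sub, sub_neg_eq_add, add_comm]
    exact ha ⟨c / y, by field_simp; linear_combination hc⟩

theorem norm_le_zpow_neg_valuation (a : ℚ_[p]) : ‖a‖ ≤ (p : ℝ) ^ (-a.valuation) := by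
  rcases eq_or_ne a 0 with rfl | ha
  · simp
  · exact (norm_eq_zpow_neg_valuation ha).le

theorem norm_le_sq_of_zpow_neg_half_valuation_le {a : ℚ_[p]} {r : ℝ}
    (hr : (p : ℝ) ^ (-(a.valuation / 2)) ≤ r) : ‖a‖ ≤ r ^ 2 := by
  have hp : (1 : ℝ) ≤ p := by exact_mod_cast (Fact.out : p.Prime).one_le
  calc ‖a‖ ≤ (p : ℝ) ^ (-a.valuation) := norm_le_zpow_neg_valuation a
    _ ≤ (p : ℝ) ^ (-(a.valuation / 2) * 2) := zpow_le_zpow_right₀ hp (by omega)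
    _ = ((p : ℝ) ^ (-(a.valuation / 2))) ^ 2 := by rw [zpow_mul]; norm_cast
    _ ≤ r ^ 2 := by gcongr

theorem norm_mul_sq_le_one_of_le_zpow_half_valuation {a : ℚ_[p]} {r : ℝ} (hr₀ : 0 ≤ r)
    (hr : r ≤ (p : ℝ) ^ (a.valuation / 2)) : ‖a‖ * r ^ 2 ≤ 1 := by
  have hp : (1 : ℝ) ≤ p := by exact_mod_cast (Fact.out : p.Prime).one_le
  calc ‖a‖ * r ^ 2 ≤ (p : ℝ) ^ (-a.valuation) * ((p : ℝ) ^ (a.valuation / 2)) ^ 2 := by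
        gcongr; exact norm_le_zpow_neg_valuation a
    _ = (p : ℝ) ^ (-a.valuation + a.valuation / 2 * 2) := by
        rw [zpow_add₀ (by positivity), zpow_mul]; norm_cast
    _ ≤ 1 := zpow_le_one_of_nonpos₀ hp (by omega)

end Padic

theorem stmt18_general (p : ℕ) [Fact p.Prime] (hp : 3 ≤ p) (a : ℚ_[p])
    (hsq : ¬ ∃ c : ℚ_[p], c ^ 2 = -a)
    (x₀ : ℚ_[p])
    (hx₀1 : (p : ℝ) ^ (-(a.valuation / 2)) ≤ ‖x₀‖)
    (hx₀2 : ‖x₀‖ ≤ (p : ℝ) ^ (a.valuation / 2))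
    (x : ℚ_[p]) (hx : ‖x - x₀‖ ≤ ‖x₀‖ / p) :
    ‖(fun z : ℚ_[p] => a * z + 1 / z)^[2] x -
      (fun z : ℚ_[p] => a * z + 1 / z)^[2] x₀‖ ≤ ‖x - x₀‖ := by
  have hx₀_pos : 0 < ‖x₀‖ :=
    (zpow_pos (by exact_mod_cast (Fact.out : p.Prime).pos) _).trans_le hx₀1
  have hx_norm : ‖x‖ = ‖x₀‖ := Padic.norm_eq_of_norm_sub_lt_right <|
    hx.trans_lt (div_lt_self hx₀_pos (by exact_mod_cast (by omega : 1 < p)))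
  have ha_mul_le := Padic.norm_mul_sq_le_one_of_le_zpow_half_valuation hx₀_pos.le hx₀2
  have hunit (y : ℚ_[p]) (hy : ‖y‖ = ‖x₀‖) : ‖a * y ^ 2 + 1‖ = 1 :=
    Padic.norm_mul_sq_add_one_eq_one (by omega) (fun ⟨c, hc⟩ ↦ hsq ⟨c, by rw [hc, sq]⟩)
      (by rwa [norm_mul, norm_pow, hy])
  exact norm_phi_iterate_two_sub_le (norm_pos_iff.mp hx₀_pos) hx_norm hunit
    (Padic.norm_le_sq_of_zpow_neg_half_valuation_le hx₀1) ha_mul_le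

theorem stmt18 (p : ℕ) [Fact p.Prime] (hp : 3 ≤ p) (a : ℚ_[p])
    (ha0 : 0 < ‖a‖) (ha1 : ‖a‖ < 1)
    (hsq : ¬ ∃ c : ℚ_[p], c ^ 2 = -a)
    (x₀ : ℚ_[p])
    (hx₀1 : (p : ℝ) ^ (-(a.valuation / 2)) ≤ ‖x₀‖)
    (hx₀2 : ‖x₀‖ ≤ (p : ℝ) ^ (a.valuation / 2))
    (x : ℚ_[p]) (hx : ‖x - x₀‖ ≤ ‖x₀‖ / p) :
    ‖(fun z : ℚ_[p] => a * z + 1 / z)^[2] x -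
      (fun z : ℚ_[p] => a * z + 1 / z)^[2] x₀‖ ≤ ‖x - x₀‖ :=
  stmt18_general p hp a hsq x₀ hx₀1 hx₀2 x hx
end
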